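/- Let G be a finite abelian group. If the prime index graph Π(G) is regular, then G is cyclic of squarefree order p₁⋯p_s and Π(G) is isomorphic to the hypercube graph Q_s. -/

import Mathlib

/-- The prime index graph of a group: vertices are subgroups, two distinct
subgroups are adjacent iff one is contained in the other with prime index. -/
def primeIndexGraph (G : Type*) [Group G] : SimpleGraph (Subgroup G) :=
  SimpleGraph.fromRel (fun H K => H ≤ K ∧ (H.relIndex K).Prime)

/-- The Cartesian (box) product of a finite family of graphs. -/
def boxProdPi {ι : Type*} {α : ι → Type*} (Γ : ∀ i, SimpleGraph (α i)) :
    SimpleGraph (∀ i, α i) where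
  Adj a b := ∃ i, (Γ i).Adj (a i) (b i) ∧ ∀ j, j ≠ i → a j = b j
  symm := by
    constructor
    rintro a b ⟨i, hadj, heq⟩
    exact ⟨i, hadj.symm, fun j hj => (heq j hj).symm⟩
  loopless := by
    constructor
    rintro a ⟨i, hadj, -⟩
    exact (Γ i).irrefl hadj

/-- The hypercube graph `Q s`, the box product of `s` copies of `P₂`. -/
def hypercubeGraph (s : ℕ) : SimpleGraph (Fin s → Fin 2) :=
  boxProdPi (fun _ : Fin s => SimpleGraph.pathGraph 2)

/-!
Suppose `p² ∣ |G|` and let `A ≤ G` have order `p`. The neighbours of `⊥` are the subgroups of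
prime order; by the correspondence theorem the neighbours of `A` are `⊥` together with the
preimages of the subgroups of prime order of `G ⧸ A`. For a prime `q ≠ p`, `B ↦ BA/A` is a
bijection between the subgroups of order `q` of `G` and of `G ⧸ A`, so `deg ⊥ = deg A` forces
`N_p(G) = N_p(G ⧸ A) + 1`, where `N_p` counts subgroups of order `p`. But the elements of order
`p` give `(p - 1) N_p + 1 = |{x | x ^ p = 1}| ≡ 0 [MOD p]`, so `N_p ≡ 1 [MOD p]` for both
groups, a contradiction. Hence `|G|` is squarefree and `G` is cyclic.

In a cyclic group, subgroups correspond to divisors of `|G|` ordered by divisibility, and prime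
index is exactly the covering relation, so `Π(G)` is the Hasse diagram of that lattice. For
squarefree `|G| = p₁ ⋯ pₛ` the divisor lattice is the Boolean lattice `{0,1}ˢ`, whose Hasse
diagram is `Q_s`.
-/

open SimpleGraph

namespace Subgroup

section Group

variable {G : Type*} [Group G] {H K : Subgroup G}

theorem card_mul_relIndex (h : H ≤ K) : Nat.card H * H.relIndex K = Nat.card K := by
  simpa [relIndex_bot_left] using relIndex_mul_relIndex ⊥ H K bot_le h

theorem pow_card_eq_one_of_mem {x : G} (hx : x ∈ H) : x ^ Nat.card H = 1 :=
  orderOf_dvd_iff_pow_eq_one.mp (H.orderOf_dvd_natCard hx)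

theorem card_map_mk'_of_coprime {A B : Subgroup G} [A.Normal]
    (h : (Nat.card A).Coprime (Nat.card B)) :
    Nat.card (B.map (QuotientGroup.mk' A)) = Nat.card B := by
  rw [← relIndex_ker, QuotientGroup.ker_mk', ← inf_relIndex_right,
    disjoint_iff.mp (disjoint_of_coprime_natCard h), relIndex_bot_left]

theorem relIndex_eq_card_map_mk' (A : Subgroup G) [A.Normal] (K : Subgroup G) :
    A.relIndex K = Nat.card (K.map (QuotientGroup.mk' A)) := by
  rw [← relIndex_ker, QuotientGroup.ker_mk']

theorem exists_map_mk'_eq_of_coprime [Finite G] {A : Subgroup G} [A.Normal]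
    {L : Subgroup (G ⧸ A)} (hL : (Nat.card L).Prime) (hAL : (Nat.card A).Coprime (Nat.card L)) :
    ∃ B : Subgroup G, Nat.card B = Nat.card L ∧ B.map (QuotientGroup.mk' A) = L := by
  have := Fact.mk hL
  set K := L.comap (QuotientGroup.mk' A)
  have hK : Nat.card A * Nat.card L = Nat.card K := by
    rw [← card_mul_relIndex (QuotientGroup.le_comap_mk' A L), relIndex_eq_card_map_mk',
      map_comap_eq_self_of_surjective (QuotientGroup.mk'_surjective A)]
  obtain ⟨g, hg⟩ := exists_prime_orderOf_dvd_card' (G := K) _ (hK ▸ dvd_mul_left _ _)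
  have hB : Nat.card (zpowers (g : G)) = Nat.card L := by
    rw [Nat.card_zpowers, orderOf_coe, hg]
  refine ⟨zpowers (g : G), hB, eq_of_le_of_card_ge ?_ ?_⟩
  · exact map_le_iff_le_comap.mpr (zpowers_le.mpr g.2)
  · rw [card_map_mk'_of_coprime (hB ▸ hAL), hB]

theorem covBy_of_relIndex_prime (hle : H ≤ K) (hp : (H.relIndex K).Prime) : H ⋖ K := by
  refine ⟨lt_of_le_not_ge hle fun hKH => hp.ne_one (relIndex_eq_one.mpr hKH),
    fun L hHL hLK => ?_⟩
  rw [← relIndex_mul_relIndex H L K hHL.le hLK.le, Nat.prime_mul_iff] at hp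
  rcases hp with ⟨-, h⟩ | ⟨-, h⟩
  · exact hLK.not_ge (relIndex_eq_one.mp h)
  · exact hHL.not_ge (relIndex_eq_one.mp h)

end Group

theorem le_of_le_sup_of_coprime {G : Type*} [CommGroup G] {A B C : Subgroup G}
    (hB : B ≤ A ⊔ C) (hAB : (Nat.card A).Coprime (Nat.card B))
    (hCB : Nat.card C ∣ Nat.card B) : B ≤ C := by
  intro x hx
  obtain ⟨a, ha, c, hc, rfl⟩ := mem_sup.mp (hB hx)
  have hcB : c ^ Nat.card B = 1 :=
    orderOf_dvd_iff_pow_eq_one.mp ((C.orderOf_dvd_natCard hc).trans hCB)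
  have haB : a ^ Nat.card B = 1 := by
    simpa [mul_pow, hcB] using pow_card_eq_one_of_mem hx
  have ha1 : a = 1 := by
    simpa [hAB.gcd_eq_one] using pow_gcd_eq_one.mpr ⟨pow_card_eq_one_of_mem ha, haB⟩
  rwa [ha1, one_mul]

end Subgroup

open Subgroup

theorem primeIndexGraph_adj {G : Type*} [Group G] {H K : Subgroup G} :
    (primeIndexGraph G).Adj H K ↔
      H ≤ K ∧ (H.relIndex K).Prime ∨ K ≤ H ∧ (K.relIndex H).Prime := by
  refine ⟨fun h => h.2, fun h => ⟨?_, h⟩⟩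
  rintro rfl
  simp [Subgroup.relIndex_self, Nat.not_prime_one] at h

section Counting

variable {X : Type*} [Group X] [Finite X] {p : ℕ}

theorem orderOf_eq_and_zpowers_eq_iff {B : Subgroup X} (hp : p.Prime) (hB : Nat.card B = p)
    {x : X} : orderOf x = p ∧ zpowers x = B ↔ x ∈ B ∧ x ≠ 1 := by
  constructor
  · rintro ⟨hx, rfl⟩
    exact ⟨mem_zpowers x, fun h1 => hp.ne_one (by rw [← hx, h1, orderOf_one])⟩
  · rintro ⟨hx, hx1⟩
    have hord : orderOf x = p :=
      ((Nat.dvd_prime hp).mp (hB ▸ B.orderOf_dvd_natCard hx)).resolve_left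
        (mt orderOf_eq_one_iff.mp hx1)
    exact ⟨hord, eq_of_le_of_card_ge (zpowers_le.mpr hx) (by rw [Nat.card_zpowers, hord, hB])⟩

theorem ncard_setOf_orderOf_eq_prime (hp : p.Prime) :
    {x : X | orderOf x = p}.ncard = (p - 1) * {B : Subgroup X | Nat.card B = p}.ncard := by
  classical
  have := Fintype.ofFinite X
  have := Fintype.ofFinite (Subgroup X)
  simp only [Set.ncard_eq_toFinset_card', Set.toFinset_ofPred, mul_comm (p - 1)]
  rw [Finset.card_eq_sum_card_fiberwise (f := fun x => zpowers x)
    (t := {B : Subgroup X | Nat.card B = p}) fun x hx => by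
      simp only [Finset.coe_filter, Finset.mem_univ, true_and, Set.mem_ofPred_eq] at hx ⊢
      rw [Nat.card_zpowers, hx]]
  refine Finset.sum_const_nat fun B hB => ?_
  rw [Finset.mem_filter_univ] at hB
  rw [Finset.filter_filter]
  simp only [orderOf_eq_and_zpowers_eq_iff hp hB]
  rw [← Set.ncard_coe_finset, Finset.coe_filter, ← hB, ← SetLike.coe_sort_coe,
    Nat.card_coe_set_eq, ← Set.ncard_sdiff_singleton_of_mem (one_mem B)]
  simp only [Finset.mem_univ, true_and]
  rfl

theorem ncard_setOf_card_prime_eq_add (hp : p.Prime) :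
    {B : Subgroup X | (Nat.card B).Prime}.ncard =
      {B : Subgroup X | Nat.card B = p}.ncard +
        {B : Subgroup X | (Nat.card B).Prime ∧ Nat.card B ≠ p}.ncard := by
  rw [← Set.ncard_inter_add_ncard_sdiff_eq_ncard _ {B : Subgroup X | Nat.card B = p}]
  congr 2
  ext B
  simp only [Set.mem_inter_iff, Set.mem_ofPred_eq]
  exact ⟨And.right, fun h => ⟨h ▸ hp, h⟩⟩

end Counting

theorem ncard_setOf_card_eq_prime_modEq_one {X : Type*} [CommGroup X] [Finite X] {p : ℕ}
    (hp : p.Prime) (hdvd : p ∣ Nat.card X) :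
    {B : Subgroup X | Nat.card B = p}.ncard ≡ 1 [MOD p] := by
  have := Fact.mk hp
  set T := (powMonoidHom p : X →* X).ker
  have hT : Nat.card T = (p - 1) * {B : Subgroup X | Nat.card B = p}.ncard + 1 := by
    have hset : (T : Set X) = insert 1 {x : X | orderOf x = p} := by
      ext x
      simp [T, ← orderOf_dvd_iff_pow_eq_one, Nat.dvd_prime hp, orderOf_eq_one_iff]
    rw [← SetLike.coe_sort_coe, Nat.card_coe_set_eq, hset, Set.ncard_insert_of_notMem
      (by simpa using hp.ne_one.symm), ncard_setOf_orderOf_eq_prime hp]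
  obtain ⟨g, hg⟩ := exists_prime_orderOf_dvd_card' p hdvd
  have hpT : p ∣ Nat.card T :=
    hg ▸ T.orderOf_dvd_natCard (by simp [T, ← hg, pow_orderOf_eq_one])
  rw [hT, ← ZMod.natCast_eq_zero_iff] at hpT
  rw [← ZMod.natCast_eq_natCast_iff]
  push_cast [hp.one_le, ZMod.natCast_self] at hpT ⊢
  linear_combination -hpT


section Neighbours

variable {G : Type*} [Group G]

theorem primeIndexGraph_neighborSet_bot :
    (primeIndexGraph G).neighborSet ⊥ = {B : Subgroup G | (Nat.card B).Prime} := by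
  ext B
  simp only [SimpleGraph.mem_neighborSet, primeIndexGraph_adj, relIndex_bot_left, le_bot_iff,
    Set.mem_ofPred_eq]
  refine ⟨?_, fun h => .inl ⟨bot_le, h⟩⟩
  rintro (⟨-, h⟩ | ⟨rfl, h⟩)
  · exact h
  · simpa [relIndex_self] using h

theorem primeIndexGraph_neighborSet_of_card_prime {A : Subgroup G} (hA : (Nat.card A).Prime) :
    (primeIndexGraph G).neighborSet A = insert ⊥ {K | A ≤ K ∧ (A.relIndex K).Prime} := by
  ext K
  simp only [SimpleGraph.mem_neighborSet, primeIndexGraph_adj, Set.mem_insert_iff,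
    Set.mem_ofPred_eq]
  refine or_comm.trans (or_congr_left ⟨fun ⟨hKA, h⟩ => ?_, ?_⟩)
  · rw [← card_mul_relIndex hKA, Nat.prime_mul_iff] at hA
    rcases hA with ⟨-, h1⟩ | ⟨-, h1⟩
    · exact absurd h1 h.ne_one
    · exact card_eq_one.mp h1
  · rintro rfl
    exact ⟨bot_le, by rwa [relIndex_bot_left]⟩

theorem ncard_setOf_relIndex_prime (N : Subgroup G) [N.Normal] :
    {K : Subgroup G | N ≤ K ∧ (N.relIndex K).Prime}.ncard =
      {L : Subgroup (G ⧸ N) | (Nat.card L).Prime}.ncard := by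
  refine Set.ncard_congr (fun K _ => K.map (QuotientGroup.mk' N)) ?_ ?_ ?_
  · rintro K ⟨-, hK⟩
    rwa [relIndex_eq_card_map_mk'] at hK
  · rintro K K' ⟨hK, -⟩ ⟨hK', -⟩ h
    rw [← sup_eq_right.mpr hK, ← sup_eq_right.mpr hK', ← QuotientGroup.comap_map_mk', h,
      QuotientGroup.comap_map_mk']
  · intro L hL
    have hmap := map_comap_eq_self_of_surjective (QuotientGroup.mk'_surjective N) L
    refine ⟨_, ⟨QuotientGroup.le_comap_mk' N L, ?_⟩, hmap⟩
    rwa [relIndex_eq_card_map_mk', hmap]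

theorem ncard_primeIndexGraph_neighborSet_of_card_prime [Finite G] {A : Subgroup G}
    [A.Normal] (hA : (Nat.card A).Prime) :
    ((primeIndexGraph G).neighborSet A).ncard =
      ((primeIndexGraph (G ⧸ A)).neighborSet ⊥).ncard + 1 := by
  rw [primeIndexGraph_neighborSet_of_card_prime hA, Set.ncard_insert_of_notMem,
    ncard_setOf_relIndex_prime, primeIndexGraph_neighborSet_bot (G := G ⧸ A)]
  rintro ⟨hA', -⟩
  rw [le_bot_iff.mp hA', card_bot] at hA
  exact Nat.not_prime_one hA

end Neighbours

theorem ncard_setOf_card_prime_ne_quotient {G : Type*} [CommGroup G] [Finite G] {A : Subgroup G}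
    {p : ℕ} (hp : p.Prime) (hA : Nat.card A = p) :
    {B : Subgroup G | (Nat.card B).Prime ∧ Nat.card B ≠ p}.ncard =
      {L : Subgroup (G ⧸ A) | (Nat.card L).Prime ∧ Nat.card L ≠ p}.ncard := by
  have hcop {q : ℕ} (hq : q.Prime) (hqp : q ≠ p) : (Nat.card A).Coprime q :=
    hA ▸ (Nat.coprime_primes hp hq).mpr hqp.symm
  refine Set.ncard_congr (fun B _ => B.map (QuotientGroup.mk' A)) ?_ ?_ ?_
  · rintro B ⟨hB, hBp⟩
    rw [Set.mem_ofPred_eq, card_map_mk'_of_coprime (hcop hB hBp)]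
    exact ⟨hB, hBp⟩
  · rintro B B' ⟨hB, hBp⟩ ⟨hB', hB'p⟩ h
    have hcard : Nat.card B' = Nat.card B := by
      rw [← card_map_mk'_of_coprime (hcop hB hBp), ← card_map_mk'_of_coprime (hcop hB' hB'p), h]
    have hle : B ≤ A ⊔ B' := by
      rw [← QuotientGroup.comap_map_mk', ← h]
      exact le_comap_map _ _
    exact eq_of_le_of_card_ge (le_of_le_sup_of_coprime hle (hcop hB hBp) hcard.dvd) hcard.le
  · rintro L ⟨hL, hLp⟩
    obtain ⟨B, hB, hmap⟩ := exists_map_mk'_eq_of_coprime hL (hcop hL hLp)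
    exact ⟨B, ⟨hB ▸ hL, hB ▸ hLp⟩, hmap⟩

theorem squarefree_card_of_primeIndexGraph_regular {G : Type*} [CommGroup G] [Finite G]
    (h : ∃ d : ℕ, ∀ H : Subgroup G, ((primeIndexGraph G).neighborSet H).ncard = d) :
    Squarefree (Nat.card G) := by
  refine Nat.squarefree_iff_prime_squarefree.mpr fun p hp hpp => ?_
  have := Fact.mk hp
  obtain ⟨x, hx⟩ := exists_prime_orderOf_dvd_card' p (dvd_of_mul_right_dvd hpp)
  have hA : Nat.card (zpowers x) = p := by rw [Nat.card_zpowers, hx]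
  have hpQ : p ∣ Nat.card (G ⧸ zpowers x) := by
    rw [card_eq_card_quotient_mul_card_subgroup (zpowers x), hA] at hpp
    exact Nat.dvd_of_mul_dvd_mul_right hp.pos hpp
  obtain ⟨d, hd⟩ := h
  have hdeg := (hd ⊥).trans (hd (zpowers x)).symm
  rw [ncard_primeIndexGraph_neighborSet_of_card_prime (A := zpowers x) (by rwa [hA]),
    primeIndexGraph_neighborSet_bot, primeIndexGraph_neighborSet_bot,
    ncard_setOf_card_prime_eq_add hp, ncard_setOf_card_prime_eq_add hp,
    ncard_setOf_card_prime_ne_quotient hp hA] at hdeg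
  have h12 : 1 ≡ 2 [MOD p] := calc
    1 ≡ {B : Subgroup G | Nat.card B = p}.ncard [MOD p] :=
      (ncard_setOf_card_eq_prime_modEq_one hp (dvd_of_mul_left_dvd hpp)).symm
    _ = {L : Subgroup (G ⧸ zpowers x) | Nat.card L = p}.ncard + 1 := by omega
    _ ≡ 1 + 1 [MOD p] := (ncard_setOf_card_eq_prime_modEq_one hp hpQ).add_right 1
  exact hp.not_dvd_one ((Nat.modEq_iff_dvd' (by norm_num)).mp h12)

namespace IsCyclic

variable {G : Type*} [CommGroup G] [Finite G] [IsCyclic G]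

theorem card_ker_powMonoidHom_of_dvd {d : ℕ} (hd : d ∣ Nat.card G) :
    Nat.card (powMonoidHom d : G →* G).ker = d := by
  rw [card_powMonoidHom_ker, Nat.gcd_eq_right hd]

theorem eq_ker_powMonoidHom_card (H : Subgroup G) :
    H = (powMonoidHom (Nat.card H) : G →* G).ker :=
  eq_of_le_of_card_ge (fun _ => pow_card_eq_one_of_mem)
    (card_ker_powMonoidHom_of_dvd H.card_subgroup_dvd_card).le

theorem le_iff_card_dvd {H K : Subgroup G} : H ≤ K ↔ Nat.card H ∣ Nat.card K := by
  refine ⟨card_dvd_of_le, fun h x hx => ?_⟩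
  rw [eq_ker_powMonoidHom_card K]
  exact (orderOf_dvd_iff_pow_eq_one.mp ((H.orderOf_dvd_natCard hx).trans h))

theorem exists_card_eq {d : ℕ} (hd : d ∣ Nat.card G) : ∃ H : Subgroup G, Nat.card H = d :=
  ⟨_, card_ker_powMonoidHom_of_dvd hd⟩

theorem covBy_iff {H K : Subgroup G} : H ⋖ K ↔ H ≤ K ∧ (H.relIndex K).Prime := by
  refine ⟨fun h => ⟨h.le, ?_⟩, fun h => covBy_of_relIndex_prime h.1 h.2⟩
  have hK := card_mul_relIndex h.le
  obtain ⟨q, hq, m, hm⟩ := Nat.exists_prime_and_dvd (mt relIndex_eq_one.mp h.lt.not_ge)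
  obtain ⟨L, hL⟩ := exists_card_eq (G := G) (d := Nat.card H * q)
    (.trans ⟨m, by rw [← hK, hm, mul_assoc]⟩ K.card_subgroup_dvd_card)
  have hHL : H ≤ L := le_iff_card_dvd.mpr (hL ▸ dvd_mul_right _ _)
  have hLK : L ≤ K := le_iff_card_dvd.mpr ⟨m, by rw [hL, ← hK, hm, mul_assoc]⟩
  have hH : 0 < Nat.card H := Nat.card_pos
  rcases h.eq_or_eq hHL hLK with rfl | rfl
  · exact absurd (Nat.eq_of_mul_eq_mul_left hH (hL.symm.trans (mul_one _).symm)) hq.ne_one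
  · rwa [Nat.eq_of_mul_eq_mul_left hH (hK.trans hL)]

end IsCyclic

namespace Nat

def nthPrimeFactor (n : ℕ) (i : Fin n.primeFactors.card) : ℕ :=
  n.primeFactors.orderIsoOfFin rfl i

theorem nthPrimeFactor_mem (n : ℕ) (i : Fin n.primeFactors.card) :
    n.nthPrimeFactor i ∈ n.primeFactors :=
  (n.primeFactors.orderIsoOfFin rfl i).2

theorem nthPrimeFactor_injective (n : ℕ) : Function.Injective n.nthPrimeFactor :=
  Subtype.val_injective.comp (n.primeFactors.orderIsoOfFin rfl).injective

theorem prod_nthPrimeFactor {n : ℕ} (hn : Squarefree n) : ∏ i, n.nthPrimeFactor i = n := by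
  calc ∏ i, n.nthPrimeFactor i = ∏ p : n.primeFactors, (p : ℕ) :=
        (n.primeFactors.orderIsoOfFin rfl).toEquiv.prod_comp (fun p => (p : ℕ))
    _ = ∏ p ∈ n.primeFactors, p := Finset.prod_coe_sort n.primeFactors id
    _ = n := prod_primeFactors_of_squarefree hn

def primeFactorVector (n d : ℕ) (i : Fin n.primeFactors.card) : Fin 2 :=
  if n.nthPrimeFactor i ∣ d then 1 else 0

theorem primeFactorVector_le_iff {n d e : ℕ} (hn : Squarefree n) (hd : d ∣ n) :
    primeFactorVector n d ≤ primeFactorVector n e ↔ d ∣ e := by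
  have hfin : ∀ a b : Prop, [Decidable a] → [Decidable b] →
      ((if a then 1 else 0 : Fin 2) ≤ if b then 1 else 0) ↔ (a → b) := by
    intro a b _ _; split_ifs <;> simp_all
  simp only [Pi.le_def, primeFactorVector, hfin]
  refine ⟨fun h => ?_, fun h i hi => hi.trans h⟩
  rw [← prod_primeFactors_of_squarefree (hn.squarefree_of_dvd hd)]
  refine Finset.prod_primes_dvd e (fun q hq => (prime_of_mem_primeFactors hq).prime)
    fun q hq => ?_
  obtain ⟨i, rfl⟩ : ∃ i, n.nthPrimeFactor i = q :=
    ⟨(n.primeFactors.orderIsoOfFin rfl).symm ⟨q, primeFactors_mono hd hn.ne_zero hq⟩, by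
      simp [nthPrimeFactor]⟩
  exact h i (dvd_of_mem_primeFactors hq)

theorem exists_primeFactorVector_eq {n : ℕ} (hn : Squarefree n)
    (v : Fin n.primeFactors.card → Fin 2) :
    ∃ d, d ∣ n ∧ primeFactorVector n d = v := by
  refine ⟨∏ i, n.nthPrimeFactor i ^ (v i : ℕ), ?_, funext fun j => ?_⟩
  · conv_rhs => rw [← prod_nthPrimeFactor hn]
    exact Finset.prod_dvd_prod_of_dvd _ _ fun i _ =>
      (pow_dvd_pow _ (Fin.is_le (v i))).trans (pow_one _).dvd
  · have hp (i) : (n.nthPrimeFactor i).Prime :=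
      prime_of_mem_primeFactors (n.nthPrimeFactor_mem i)
    have hdvd : (∃ i, n.nthPrimeFactor j ∣ n.nthPrimeFactor i ^ (v i : ℕ)) ↔ v j = 1 := by
      refine ⟨fun ⟨i, hi⟩ => ?_, fun h => ⟨j, by simp [h]⟩⟩
      rcases Fin.exists_fin_two.mp ⟨v i, rfl⟩ with h | h <;>
        simp only [h, Fin.val_zero, Fin.val_one, pow_zero, pow_one] at hi
      · exact absurd (Nat.dvd_one.mp hi) (hp j).ne_one
      · rwa [← n.nthPrimeFactor_injective ((prime_dvd_prime_iff_eq (hp j) (hp i)).mp hi)] at h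
    simp only [primeFactorVector, (hp j).prime.dvd_finsetProd_iff, Finset.mem_univ, true_and,
      hdvd]
    split_ifs with h
    · exact h.symm
    · omega

end Nat

theorem boxProdPi_hasse {ι : Type*} {α : ι → Type*} [∀ i, PartialOrder (α i)] :
    boxProdPi (fun i => hasse (α i)) = hasse (∀ i, α i) := by
  ext a b
  simp only [boxProdPi, hasse_adj, Pi.covBy_iff, or_and_right, exists_or]
  refine or_congr Iff.rfl (exists_congr fun i => and_congr Iff.rfl ?_)
  exact forall_congr' fun j => imp_congr_right fun _ => eq_comm

theorem hypercubeGraph_eq_hasse (s : ℕ) : hypercubeGraph s = hasse (Fin s → Fin 2) :=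
  boxProdPi_hasse

def OrderIso.hasseIso {α β : Type*} [Preorder α] [Preorder β] (e : α ≃o β) :
    hasse α ≃g hasse β where
  toEquiv := e.toEquiv
  map_rel_iff' := by simp [hasse_adj, apply_covBy_apply_iff]

theorem primeIndexGraph_eq_hasse (G : Type*) [CommGroup G] [Finite G] [IsCyclic G] :
    primeIndexGraph G = hasse (Subgroup G) := by
  ext H K
  rw [primeIndexGraph_adj, hasse_adj, IsCyclic.covBy_iff, IsCyclic.covBy_iff]

noncomputable def IsCyclic.subgroupOrderIsoOfSquarefree {G : Type*} [CommGroup G] [Finite G]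
    [IsCyclic G] (hG : Squarefree (Nat.card G)) :
    Subgroup G ≃o (Fin (Nat.card G).primeFactors.card → Fin 2) :=
  OrderIso.ofSurjective
    (OrderEmbedding.ofMapLEIff (fun H => Nat.primeFactorVector (Nat.card G) (Nat.card H))
      fun H K => by
        rw [Nat.primeFactorVector_le_iff hG H.card_subgroup_dvd_card, IsCyclic.le_iff_card_dvd])
    fun v => by
      obtain ⟨d, hd, rfl⟩ := Nat.exists_primeFactorVector_eq hG v
      obtain ⟨H, rfl⟩ := IsCyclic.exists_card_eq hd
      exact ⟨H, rfl⟩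

theorem primeIndexGraph_regular_abelian (G : Type*) [CommGroup G] [Fintype G]
    (h : ∃ d : ℕ, ∀ H : Subgroup G, ((primeIndexGraph G).neighborSet H).ncard = d) :
    IsCyclic G ∧ Squarefree (Nat.card G) ∧
      Nonempty (primeIndexGraph G ≃g hypercubeGraph (Nat.card G).primeFactors.card) := by
  have hsf := squarefree_card_of_primeIndexGraph_regular h
  have := IsZGroup.of_squarefree hsf
  have : IsCyclic G := .of_exponent_eq_card (IsZGroup.exponent_eq_card G)
  refine ⟨this, hsf, ?_⟩
  rw [primeIndexGraph_eq_hasse, hypercubeGraph_eq_hasse]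
  exact ⟨(IsCyclic.subgroupOrderIsoOfSquarefree hsf).hasseIso⟩
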